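/- Let A ∈ GL(2,ℤ) be hyperbolic. Then the centralizer of A in GL(2,ℤ) is virtually cyclic: there exists A₀ ∈ GL(2,ℤ) such that B ∈ GL(2,ℤ) commutes with A if and only if B = ±A₀ᵏ for some k ∈ ℤ. In particular, every B commuting with A satisfies Bʲ = ±Aᵏ for some integers j > 0 and k. -/

import Mathlib

/-!
Hyperbolicity forces the characteristic polynomial of `A` to have an irrational real root `θ`:
a non-real root would have norm `√(det A) = 1`, and a rational root would be an integral unit.
Hence `A` is not scalar, its centralizer consists of the matrices `x + y A` with `x, y ∈ ℚ`, and
`x + y A ↦ x + y θ` is multiplicative on it. The logarithms of the absolute values of these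
numbers form a subgroup of `ℝ`. It is discrete, because `x + y θ` and its conjugate `x + y θ'`
have product `det B = ±1` and together bound the integer entries of `B`; so it is cyclic.
Irrationality of `θ` makes the kernel `{±1}`, which gives `A₀`. Finally `A = ±A₀ ^ m` with
`m ≠ 0`, so an even power of `B = ±A₀ ^ k` is a power of `A`.
-/

open Matrix Polynomial

lemma isRoot_charpoly_map_intCast_iff {R : Type*} [CommRing R] [Nontrivial R]
    (M : Matrix (Fin 2) (Fin 2) ℤ) (x : R) :
    (M.map (Int.cast : ℤ → R)).charpoly.IsRoot x ↔ x ^ 2 - M.trace * x + M.det = 0 := by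
  rw [charpoly_fin_two, IsRoot.def]
  simp [trace_fin_two, det_fin_two]

section Hyperbolic

variable {M : Matrix (Fin 2) (Fin 2) ℤ} (hdet : IsUnit M.det)
  (hM : ∀ μ : ℂ, (M.map (Int.cast : ℤ → ℂ)).charpoly.IsRoot μ → ‖μ‖ ≠ 1)
include hdet hM

lemma exists_real_root_of_forall_norm_ne_one :
    ∃ θ : ℝ, θ ^ 2 - M.trace * θ + M.det = 0 := by
  set t : ℝ := (M.trace : ℝ)
  have hΔ : 0 ≤ t ^ 2 - 4 * M.det := by
    by_contra! hΔ
    have hd : M.det = 1 := by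
      rcases Int.isUnit_iff.1 hdet with h | h
      · exact h
      · rw [h] at hΔ; push_cast at hΔ; nlinarith
    rw [hd, Int.cast_one] at hΔ
    set s := √(4 - t ^ 2)
    have hs : s ^ 2 = 4 - t ^ 2 := Real.sq_sqrt (by linarith)
    refine hM ((t / 2 : ℝ) + (s / 2 : ℝ) * Complex.I)
      ((isRoot_charpoly_map_intCast_iff M _).2 ?_) ?_
    · have hs' : (s : ℂ) ^ 2 = 4 - (t : ℂ) ^ 2 := by exact_mod_cast hs
      simp only [hd, t, Complex.ofReal_intCast] at hs' ⊢
      push_cast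
      linear_combination (-1 / 4 : ℂ) * hs' + (s : ℂ) ^ 2 / 4 * Complex.I_sq
    · rw [Complex.norm_add_mul_I, ← Real.sqrt_one]
      congr 1
      linear_combination hs / 4
  exact ⟨(t + √(t ^ 2 - 4 * M.det)) / 2, by linear_combination (1 / 4) * Real.sq_sqrt hΔ⟩

lemma irrational_of_forall_norm_ne_one {θ : ℝ} (hθ : θ ^ 2 - M.trace * θ + M.det = 0) :
    Irrational θ := by
  rintro ⟨q, rfl⟩
  have hq : q ^ 2 - M.trace * q + M.det = 0 :=
    (Rat.cast_eq_zero (α := ℝ)).1 (by push_cast [-Int.cast_det]; exact hθ)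
  obtain ⟨n, rfl⟩ : IsLocalization.IsInteger ℤ q :=
    isInteger_of_is_root_of_monic M.charpoly_monic (by simpa [charpoly_fin_two] using hq)
  have hn : n ^ 2 - M.trace * n + M.det = 0 :=
    (Int.cast_eq_zero (α := ℚ)).1 (by push_cast [-Int.cast_det]; simpa using hq)
  have hunit : IsUnit n := isUnit_of_dvd_unit ⟨M.trace - n, by linear_combination hn⟩ hdet
  refine hM n ((isRoot_charpoly_map_intCast_iff M _).2 (by exact_mod_cast hn)) ?_
  rcases Int.isUnit_iff.1 hunit with rfl | rfl <;> simp

end Hyperbolic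

lemma apply_zero_one_ne_zero_of_irrational_root {M : Matrix (Fin 2) (Fin 2) ℤ} {θ : ℝ}
    (hirr : Irrational θ) (hθ : θ ^ 2 - M.trace * θ + M.det = 0) : M 0 1 ≠ 0 := by
  intro h
  have : (θ - M 0 0) * (θ - M 1 1) = 0 := by
    simp only [trace_fin_two, det_fin_two, h] at hθ
    push_cast at hθ
    linear_combination hθ
  rcases mul_eq_zero.1 this with h | h
  · exact hirr.ne_int _ (sub_eq_zero.1 h)
  · exact hirr.ne_int _ (sub_eq_zero.1 h)

lemma finite_setOf_abs_intCast_le (K : ℝ) : {z : ℤ | |(z : ℝ)| ≤ K}.Finite := by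
  refine (Set.finite_Icc (-⌈K⌉) ⌈K⌉).subset fun z hz => ⟨?_, ?_⟩
  · have := (neg_abs_le (z : ℝ)).trans' (neg_le_neg (hz.trans (Int.le_ceil K)))
    exact_mod_cast this
  · exact_mod_cast (le_abs_self (z : ℝ)).trans (hz.trans (Int.le_ceil K))

section Commute

variable {R : Type*} [CommRing R] {M B C : Matrix (Fin 2) (Fin 2) R}

lemma commute_fin_two_apply (h : M * B = B * M) :
    M 0 1 * B 1 0 = M 1 0 * B 0 1 ∧ M 0 1 * (B 1 1 - B 0 0) = (M 1 1 - M 0 0) * B 0 1 := by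
  have h00 := congrFun (congrFun h 0) 0
  have h01 := congrFun (congrFun h 0) 1
  simp only [mul_apply, Fin.sum_univ_two] at h00 h01
  exact ⟨by linear_combination h00, by linear_combination h01⟩

lemma eq_of_commute_of_row_zero_eq [NoZeroDivisors R] (hM : M 0 1 ≠ 0) (hB : M * B = B * M)
    (hC : M * C = C * M) (h0 : B 0 0 = C 0 0) (h1 : B 0 1 = C 0 1) : B = C := by
  obtain ⟨hB₁, hB₂⟩ := commute_fin_two_apply hB
  obtain ⟨hC₁, hC₂⟩ := commute_fin_two_apply hC
  have h10 : B 1 0 = C 1 0 := mul_left_cancel₀ hM (by rw [hB₁, hC₁, h1])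
  have h11 : B 1 1 = C 1 1 := by
    have := mul_left_cancel₀ hM (hB₂.trans (h1 ▸ hC₂.symm))
    simpa [h0] using this
  ext i j
  fin_cases i <;> fin_cases j
  exacts [h0, h1, h10, h11]

end Commute

/-- If `B` commutes with `M`, then `B = x + y M` over `ℚ` with `y = B 0 1 / M 0 1`, and this is
`x + y θ`; equivalently, it is the eigenvalue of `B` on the `θ`-eigenvector `(M 0 1, θ - M 0 0)`
of `M`. -/
noncomputable def realEmbedding (M : Matrix (Fin 2) (Fin 2) ℤ) (θ : ℝ)
    (B : Matrix (Fin 2) (Fin 2) ℤ) : ℝ :=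
  B 0 0 + B 0 1 * (θ - M 0 0) / M 0 1

section RealEmbedding

variable {M B C : Matrix (Fin 2) (Fin 2) ℤ} {θ : ℝ}

lemma realEmbedding_mul (hM : M 0 1 ≠ 0) (hθ : θ ^ 2 - M.trace * θ + M.det = 0)
    (hB : M * B = B * M) (hC : M * C = C * M) :
    realEmbedding M θ (B * C) = realEmbedding M θ B * realEmbedding M θ C := by
  obtain ⟨-, hB₂⟩ := commute_fin_two_apply hB
  obtain ⟨hC₁, hC₂⟩ := commute_fin_two_apply hC
  have hM' : (M 0 1 : ℝ) ≠ 0 := by exact_mod_cast hM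
  have hC₁' : (M 0 1 * C 1 0 : ℝ) = M 1 0 * C 0 1 := by exact_mod_cast hC₁
  have hC₂' : (M 0 1 * (C 1 1 - C 0 0) : ℝ) = (M 1 1 - M 0 0) * C 0 1 := by exact_mod_cast hC₂
  simp only [trace_fin_two, det_fin_two] at hθ
  push_cast at hθ
  simp only [realEmbedding, mul_apply, Fin.sum_univ_two]
  push_cast
  field_simp
  linear_combination (B 0 1 * M 0 1 : ℝ) * hC₁' + (B 0 1 * (θ - M 0 0) : ℝ) * hC₂' -
    (B 0 1 * C 0 1 : ℝ) * hθ

lemma realEmbedding_mul_realEmbedding_trace_sub (hM : M 0 1 ≠ 0)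
    (hθ : θ ^ 2 - M.trace * θ + M.det = 0) (hB : M * B = B * M) :
    realEmbedding M θ B * realEmbedding M (M.trace - θ) B = B.det := by
  obtain ⟨hB₁, hB₂⟩ := commute_fin_two_apply hB
  have hM' : (M 0 1 : ℝ) ≠ 0 := by exact_mod_cast hM
  have hB₁' : (M 0 1 * B 1 0 : ℝ) = M 1 0 * B 0 1 := by exact_mod_cast hB₁
  have hB₂' : (M 0 1 * (B 1 1 - B 0 0) : ℝ) = (M 1 1 - M 0 0) * B 0 1 := by exact_mod_cast hB₂
  simp only [trace_fin_two, det_fin_two] at hθ ⊢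
  push_cast at hθ ⊢
  simp only [realEmbedding]
  field_simp
  linear_combination (B 0 1 * M 0 1 : ℝ) * hB₁' - (B 0 0 * M 0 1 : ℝ) * hB₂' -
    (B 0 1 ^ 2 : ℝ) * hθ

lemma abs_realEmbedding_mul_abs_realEmbedding_trace_sub (hM : M 0 1 ≠ 0)
    (hθ : θ ^ 2 - M.trace * θ + M.det = 0) (B : GL (Fin 2) ℤ) (hB : M * B = B * M) :
    |realEmbedding M θ B| * |realEmbedding M (M.trace - θ) B| = 1 := by
  rw [← abs_mul, realEmbedding_mul_realEmbedding_trace_sub hM hθ hB]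
  rcases Int.isUnit_iff.1 (isUnits_det_units B) with h | h <;> simp [h]

lemma eq_one_or_eq_neg_one_of_abs_realEmbedding_eq_one (hirr : Irrational θ) (hM : M 0 1 ≠ 0)
    (hB : M * B = B * M) (h : |realEmbedding M θ B| = 1) : B = 1 ∨ B = -1 := by
  have hB₀₁ : B 0 1 = 0 := by
    by_contra hB₀₁
    have hσ : Irrational (realEmbedding M θ B) :=
      (((hirr.sub_intCast _).intCast_mul hB₀₁).div_intCast hM).intCast_add _
    rcases (abs_eq zero_le_one).1 h with h | h
    · exact hσ.ne_one h
    · exact hσ.ne_int (-1) (by simpa using h)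
  have hB₀₀ : |B 0 0| = 1 := by
    simpa [realEmbedding, hB₀₁, ← Int.cast_abs] using h
  rcases (abs_eq zero_le_one).1 hB₀₀ with h | h
  · exact .inl (eq_of_commute_of_row_zero_eq hM hB (Commute.one_right M).eq
      (by simp [h]) (by simp [hB₀₁]))
  · exact .inr (eq_of_commute_of_row_zero_eq hM hB (Commute.one_right M).neg_right.eq
      (by simp [h]) (by simp [hB₀₁]))

lemma finite_setOf_commute_abs_realEmbedding_le (hM : M 0 1 ≠ 0) (hθ : 2 * θ ≠ M.trace)
    (r : ℝ) :
    {B | M * B = B * M ∧ |realEmbedding M θ B| ≤ r ∧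
      |realEmbedding M (M.trace - θ) B| ≤ r}.Finite := by
  set S := {B | M * B = B * M ∧ |realEmbedding M θ B| ≤ r ∧
    |realEmbedding M (M.trace - θ) B| ≤ r}
  have hM' : (M 0 1 : ℝ) ≠ 0 := by exact_mod_cast hM
  have hθ' : 2 * θ - M.trace ≠ 0 := sub_ne_zero.2 hθ
  obtain ⟨K₁, hB₀₁⟩ : ∃ K, ∀ B ∈ S, |(B 0 1 : ℝ)| ≤ K := by
    refine ⟨|(M 0 1 : ℝ)| * (2 * r) / |2 * θ - M.trace|, fun B ⟨_, h, h'⟩ => ?_⟩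
    have : (B 0 1 : ℝ) = M 0 1 * (realEmbedding M θ B - realEmbedding M (M.trace - θ) B) /
        (2 * θ - M.trace) := by
      rw [eq_div_iff hθ']; simp only [realEmbedding]; field_simp; ring
    rw [this, abs_div, abs_mul]
    gcongr
    exact (abs_sub _ _).trans (by linarith)
  obtain ⟨K₀, hB₀₀⟩ : ∃ K, ∀ B ∈ S, |(B 0 0 : ℝ)| ≤ K := by
    refine ⟨r + K₁ * |θ - M 0 0| / |(M 0 1 : ℝ)|, fun B hB => ?_⟩
    have : (B 0 0 : ℝ) = realEmbedding M θ B - B 0 1 * (θ - M 0 0) / M 0 1 := by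
      simp [realEmbedding]
    rw [this]
    refine (abs_sub _ _).trans ?_
    rw [abs_div, abs_mul]
    gcongr
    exacts [hB.2.1, hB₀₁ B hB]
  refine Set.Finite.of_finite_image (f := fun B => (B 0 0, B 0 1))
    (((finite_setOf_abs_intCast_le K₀).prod (finite_setOf_abs_intCast_le K₁)).subset ?_) ?_
  · rintro _ ⟨B, hB, rfl⟩
    exact ⟨hB₀₀ B hB, hB₀₁ B hB⟩
  · intro B hB C hC h
    simp only [Prod.ext_iff] at h
    exact eq_of_commute_of_row_zero_eq hM hB.1 hC.1 h.1 h.2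

end RealEmbedding

lemma exists_forall_eq_zpow_or_eq_mul_zpow {G : Type*} [Group G] (f : G → ℝ)
    (hf : ∀ a b, f (a * b) = f a + f b) (ε : G) (hker : ∀ g, f g = 0 → g = 1 ∨ g = ε)
    {r : ℝ} (hr : 0 < r) (hfin : (Set.range f ∩ Set.Ioo 0 r).Finite) :
    ∃ g₀ : G, ∀ g, ∃ k : ℤ, g = g₀ ^ k ∨ g = ε * g₀ ^ k := by
  let φ : Additive G →+ ℝ := AddMonoidHom.mk' (fun g => f g.toMul) fun _ _ => hf _ _
  rcases φ.range.dense_or_cyclic with hdense | ⟨α, hα⟩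
  · have hsub := hdense.open_subset_closure_inter (isOpen_Ioo (a := (0 : ℝ)) (b := r))
    have hrange : Set.range φ = Set.range f := Additive.toMul.surjective.range_comp f
    rw [AddMonoidHom.coe_range, hrange, Set.inter_comm, hfin.isClosed.closure_eq] at hsub
    exact absurd (hfin.subset hsub) (Set.Ioo_infinite hr)
  obtain ⟨g₀, hg₀⟩ : α ∈ φ.range := hα ▸ AddSubgroup.mem_closure_singleton_self α
  refine ⟨g₀.toMul, fun g => ?_⟩
  obtain ⟨k, hk⟩ :=
    AddSubgroup.mem_closure_singleton.1 (hα ▸ φ.mem_range.2 ⟨.ofMul g, rfl⟩)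
  have : f (g / g₀.toMul ^ k) = 0 := by
    change φ (.ofMul g - k • g₀) = 0
    rw [map_sub, map_zsmul, hg₀, hk, sub_self]
  rcases hker _ this with h | h
  · exact ⟨k, .inl (div_eq_one.1 h)⟩
  · exact ⟨k, .inr (div_eq_iff_eq_mul.1 h)⟩

lemma zpow_two_mul_of_eq_zpow_or_eq_neg_zpow {G : Type*} [Group G] [HasDistribNeg G] {b c : G}
    {k : ℤ} (h : b = c ^ k ∨ b = -(c ^ k)) (n : ℤ) : b ^ (2 * n) = c ^ (k * (2 * n)) := by
  rcases h with rfl | rfl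
  · exact (zpow_mul c k _).symm
  · rw [(even_two_mul n).neg_zpow, _root_.zpow_mul c k]

lemma exists_zpow_eq_zpow_of_eq_zpow_or_eq_neg_zpow {G : Type*} [Group G] [HasDistribNeg G]
    {a b c : G} {m k : ℤ} (hm : m ≠ 0) (ha : a = c ^ m ∨ a = -(c ^ m))
    (hb : b = c ^ k ∨ b = -(c ^ k)) :
    ∃ j : ℕ, ∃ l : ℤ, 0 < j ∧ b ^ (j : ℤ) = a ^ l := by
  refine ⟨2 * m.natAbs, 2 * (m.sign * k), by have := Int.natAbs_pos.2 hm; omega, ?_⟩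
  rw [Nat.cast_mul, Nat.cast_two, zpow_two_mul_of_eq_zpow_or_eq_neg_zpow hb,
    zpow_two_mul_of_eq_zpow_or_eq_neg_zpow ha, ← Int.sign_mul_self_eq_natAbs]
  ring_nf

section Centralizer

variable {A : GL (Fin 2) ℤ} {θ : ℝ}

lemma val_mul_comm_of_mem_centralizer {B : GL (Fin 2) ℤ} (hB : B ∈ Subgroup.centralizer {A}) :
    A.val * B = B * A :=
  (Commute.units_val (Subgroup.mem_centralizer_singleton_iff.1 hB).symm).eq

lemma finite_range_log_abs_realEmbedding_inter_Ioo (hM : A.val 0 1 ≠ 0)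
    (hθ : θ ^ 2 - A.val.trace * θ + A.val.det = 0)
    (hθ₂ : 2 * θ ≠ A.val.trace) :
    (Set.range (fun B : Subgroup.centralizer {A} => Real.log |realEmbedding A.val θ B.1|) ∩
      Set.Ioo 0 (Real.log 2)).Finite := by
  let f (B : Subgroup.centralizer {A}) : ℝ := Real.log |realEmbedding A.val θ B.1|
  refine ((finite_setOf_commute_abs_realEmbedding_le hM hθ₂ 2).preimage
    (Units.val_injective.comp Subtype.val_injective).injOn |>.image f).subset ?_
  rintro _ ⟨⟨B, rfl⟩, h₀, h₂⟩
  have hB := val_mul_comm_of_mem_centralizer B.2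
  have hσσ' := abs_realEmbedding_mul_abs_realEmbedding_trace_sub hM hθ B.1 hB
  have h₁ : 1 < |realEmbedding A.val θ B.1| := (Real.log_pos_iff (abs_nonneg _)).1 h₀
  have h₂ : |realEmbedding A.val θ B.1| < 2 :=
    (Real.log_lt_log_iff (by positivity) two_pos).1 h₂
  refine ⟨B, ⟨hB, h₂.le, ?_⟩, rfl⟩
  change |realEmbedding A.val (A.val.trace - θ) B.1| ≤ 2
  nlinarith [abs_nonneg (realEmbedding A.val (A.val.trace - θ) B.1)]

theorem exists_forall_commute_iff_eq_zpow_or_eq_neg_zpow (hirr : Irrational θ)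
    (hθ : θ ^ 2 - A.val.trace * θ + A.val.det = 0) :
    ∃ A₀ : GL (Fin 2) ℤ, ∀ B : GL (Fin 2) ℤ,
      A * B = B * A ↔ ∃ k : ℤ, B = A₀ ^ k ∨ B = -(A₀ ^ k) := by
  have hM := apply_zero_one_ne_zero_of_irrational_root hirr hθ
  have hθ₂ : 2 * θ ≠ A.val.trace := fun h =>
    hirr.ne_rat (A.val.trace / 2) (by push_cast; linarith)
  let C := Subgroup.centralizer {A}
  have hcomm (B : C) := val_mul_comm_of_mem_centralizer B.2
  have hσ (B : C) : realEmbedding A.val θ B.1 ≠ 0 := fun h => by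
    simpa [h] using abs_realEmbedding_mul_abs_realEmbedding_trace_sub hM hθ B.1 (hcomm B)
  obtain ⟨A₀, hA₀⟩ := exists_forall_eq_zpow_or_eq_mul_zpow
    (fun B : C => Real.log |realEmbedding A.val θ B.1|)
    (fun B B' => by
      simp only [Subgroup.coe_mul, Units.val_mul]
      rw [realEmbedding_mul hM hθ (hcomm B) (hcomm B'), abs_mul,
        Real.log_mul (abs_ne_zero.2 (hσ B)) (abs_ne_zero.2 (hσ B'))])
    ⟨-1, Subgroup.mem_centralizer_singleton_iff.2 (by simp)⟩
    (fun B h => by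
      rcases eq_one_or_eq_neg_one_of_abs_realEmbedding_eq_one hirr hM (hcomm B)
        (Real.eq_one_of_pos_of_log_eq_zero (abs_pos.2 (hσ B)) h) with h | h
      exacts [.inl (Subtype.ext (Units.ext h)), .inr (Subtype.ext (Units.ext h))])
    (Real.log_pos one_lt_two) (finite_range_log_abs_realEmbedding_inter_Ioo hM hθ hθ₂)
  have hA₀c : Commute A A₀ := (Subgroup.mem_centralizer_singleton_iff.1 A₀.2).symm
  refine ⟨A₀, fun B => ⟨fun hB => ?_, ?_⟩⟩
  · obtain ⟨k, hk | hk⟩ := hA₀ ⟨B, Subgroup.mem_centralizer_singleton_iff.2 hB.symm⟩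
    exacts [⟨k, .inl (by simpa using congrArg Subtype.val hk)⟩,
      ⟨k, .inr (by simpa using congrArg Subtype.val hk)⟩]
  · rintro ⟨k, rfl | rfl⟩
    exacts [(hA₀c.zpow_right k).eq, (hA₀c.zpow_right k).neg_right.eq]

end Centralizer

/-- The centralizer of a hyperbolic matrix `A` in `GL(2,ℤ)` is virtually cyclic:
there is `A₀ ∈ GL(2,ℤ)` such that `B` commutes with `A` iff `B = ±A₀ᵏ` for some
`k ∈ ℤ`.  In particular every `B` commuting with `A` satisfies `Bʲ = ±Aᵏ` for
some integers `j > 0` and `k`. -/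
theorem centralizer_of_hyperbolic_virtually_cyclic
    (A : GL (Fin 2) ℤ)
    (hhyp : ∀ μ : ℂ,
      (((A : Matrix (Fin 2) (Fin 2) ℤ).map (Int.cast : ℤ → ℂ)).charpoly).IsRoot μ →
        ‖μ‖ ≠ 1) :
    (∃ A₀ : GL (Fin 2) ℤ, ∀ B : GL (Fin 2) ℤ,
      (A * B = B * A ↔ ∃ k : ℤ, B = A₀ ^ k ∨ B = -(A₀ ^ k))) ∧
    (∀ B : GL (Fin 2) ℤ, A * B = B * A →
      ∃ (j : ℕ) (k : ℤ), 0 < j ∧ (B ^ (j : ℤ) = A ^ k ∨ B ^ (j : ℤ) = -(A ^ k))) := by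
  have hdet := isUnits_det_units A
  obtain ⟨θ, hθ⟩ := exists_real_root_of_forall_norm_ne_one hdet hhyp
  have hirr := irrational_of_forall_norm_ne_one hdet hhyp hθ
  obtain ⟨A₀, hA₀⟩ := exists_forall_commute_iff_eq_zpow_or_eq_neg_zpow hirr hθ
  refine ⟨⟨A₀, hA₀⟩, fun B hB => ?_⟩
  obtain ⟨m, hm⟩ := (hA₀ A).1 rfl
  have hm₀ : m ≠ 0 := by
    rintro rfl
    have := apply_zero_one_ne_zero_of_irrational_root hirr hθ
    rcases hm with h | h <;> simp [h] at this
  obtain ⟨k, hk⟩ := (hA₀ B).1 hB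
  obtain ⟨j, l, hj, h⟩ := exists_zpow_eq_zpow_of_eq_zpow_or_eq_neg_zpow hm₀ hm hk
  exact ⟨j, l, hj, .inl h⟩
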